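/- Let h_d, h_c, h_r, h_sr > 0 and P > 0 with h_r² ≤ min(h_d², h_c²). Define R_s^IC := min{R_A^IC, R_B^IC} if h_c² ≤ h_d², and R_s^IC := min{R_C^IC, R_D^IC} if h_c² > h_d². Then R̄_sym − R_s^IC ≤ 3/2 + C(h_sr²/h_c²); in particular, when the relay-to-destination links are weak, ignoring the relay and using the interference-channel scheme achieves the symmetric-rate upper bound within a finite gap, for every value of h_sr. -/
import Mathlib

set_option maxHeartbeats 1000000


/-- `C(x) = (1/2) * log₂(1 + x)`. -/
noncomputable def Cfun (x : ℝ) : ℝ := (1 / 2) * Real.logb 2 (1 + x)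

/-- Genie-aided sum-rate upper bound `R̄_S1` for the symmetric IC-FDR. -/
noncomputable def RbarS1 (hd hc hr hsr P : ℝ) : ℝ :=
  Cfun (P * (hd ^ 2 + hc ^ 2 + hr ^ 2 + 2 * hr * Real.sqrt (hd ^ 2 + hc ^ 2)))
    + Cfun (hd ^ 2 * P / (1 + max (hc ^ 2) (hsr ^ 2) * P))
    + Cfun (hsr ^ 2 / hc ^ 2)

/-- `Θ₁₂` (and, with arguments swapped, `Θ₂₁`) with `σ² = h_c²/(h_c² + h_sr²)`. -/
noncomputable def Theta (hd hc hr hsr P1 ρ1 P2 ρ2 Pr : ℝ) : ℝ :=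
  hc ^ 2 * P1 + hr ^ 2 * (1 - ρ2 ^ 2) * Pr + 2 * hc * hr * ρ1 * Real.sqrt (P1 * Pr)
    + (hc ^ 2 / (hc ^ 2 + hsr ^ 2)) * (hd * Real.sqrt P2 + hr * ρ2 * Real.sqrt Pr) ^ 2
        / (hc ^ 2 / (hc ^ 2 + hsr ^ 2) + hc ^ 2 * P2)

/-- Genie-aided sum-rate upper bound `R̄_S2` for the symmetric IC-FDR. -/
noncomputable def RbarS2 (hd hc hr hsr P : ℝ) : ℝ :=
  sSup {y : ℝ | ∃ P1 P2 Pr ρ1 ρ2 : ℝ,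
    P1 ∈ Set.Icc 0 P ∧ P2 ∈ Set.Icc 0 P ∧ Pr ∈ Set.Icc 0 P ∧ ρ1 ^ 2 + ρ2 ^ 2 ≤ 1 ∧
    y = Cfun (Theta hd hc hr hsr P1 ρ1 P2 ρ2 Pr)
        + Cfun (Theta hd hc hr hsr P2 ρ2 P1 ρ1 Pr)
        + 2 * Cfun (hsr ^ 2 / hc ^ 2)}

/-- Cut-set individual-rate bound with Gaussian inputs. -/
noncomputable def Rind (hd hr P : ℝ) : ℝ := Cfun (P * (hd + hr) ^ 2)

/-- The minimum of the computable symmetric-rate upper bounds. -/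
noncomputable def RbarSym (hd hc hr hsr P : ℝ) : ℝ :=
  min (min ((1 / 2) * RbarS1 hd hc hr hsr P) ((1 / 2) * RbarS2 hd hc hr hsr P))
    (Rind hd hr P)

/-- ETW Han–Kobayashi symmetric rate, weak interference, case A. -/
noncomputable def RAIC (hd hc P : ℝ) : ℝ := Cfun (hc ^ 2 * P + hd ^ 2 / hc ^ 2) - 1 / 2

/-- ETW Han–Kobayashi symmetric rate, weak interference, case B. -/
noncomputable def RBIC (hd hc P : ℝ) : ℝ :=
  (1 / 2) * Cfun (hd ^ 2 * P + hc ^ 2 * P) + (1 / 2) * Cfun (hd ^ 2 / hc ^ 2) - 1 / 2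

/-- ETW Han–Kobayashi symmetric rate, strong interference, case C. -/
noncomputable def RCIC (hd P : ℝ) : ℝ := Cfun (hd ^ 2 * P)

/-- ETW Han–Kobayashi symmetric rate, strong interference, case D. -/
noncomputable def RDIC (hd hc P : ℝ) : ℝ := (1 / 2) * Cfun (hd ^ 2 * P + hc ^ 2 * P)

/-! ### Auxiliary lemmas -/

lemma Cfun_zero : Cfun 0 = 0 := by simp [Cfun]

lemma Cfun_nonneg {x : ℝ} (hx : 0 ≤ x) : 0 ≤ Cfun x := by
  have h := Real.logb_nonneg (b := 2) (by norm_num) (by linarith : (1:ℝ) ≤ 1 + x)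
  unfold Cfun; linarith

lemma Cfun_mono {x y : ℝ} (hx : 0 ≤ x) (hxy : x ≤ y) : Cfun x ≤ Cfun y := by
  have h := Real.logb_le_logb_of_le (b := 2) (by norm_num)
    (by linarith : (0:ℝ) < 1 + x) (by linarith : 1 + x ≤ 1 + y)
  unfold Cfun; linarith

lemma logb_two_two : Real.logb 2 2 = 1 :=
  Real.logb_self_eq_one (by norm_num)

/-- If `1 + x ≤ 2^k (1 + y)` then `C(x) ≤ k/2 + C(y)`. -/
lemma Cfun_le_shift {x y : ℝ} (k : ℕ) (hx : 0 ≤ x) (hy : 0 ≤ y)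
    (h : 1 + x ≤ 2 ^ k * (1 + y)) : Cfun x ≤ (k : ℝ) / 2 + Cfun y := by
  have h1 : (0:ℝ) < 1 + x := by linarith
  have h2 : (0:ℝ) < 1 + y := by linarith
  have hlog : Real.logb 2 (1 + x) ≤ Real.logb 2 ((2:ℝ) ^ k * (1 + y)) :=
    Real.logb_le_logb_of_le (by norm_num) h1 h
  rw [Real.logb_mul (by positivity) (by positivity), Real.logb_pow, logb_two_two] at hlog
  unfold Cfun; linarith

/-- If `(1+a)(1+b) ≤ 2^k (1+x)²` then `C(a) + C(b) ≤ k/2 + 2 C(x)`. -/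
lemma Cfun_add_le {a b x : ℝ} (k : ℕ) (ha : 0 ≤ a) (hb : 0 ≤ b) (hx : 0 ≤ x)
    (h : (1 + a) * (1 + b) ≤ 2 ^ k * (1 + x) ^ 2) :
    Cfun a + Cfun b ≤ (k : ℝ) / 2 + 2 * Cfun x := by
  have h1 : (0:ℝ) < 1 + a := by linarith
  have h2 : (0:ℝ) < 1 + b := by linarith
  have h3 : (0:ℝ) < 1 + x := by linarith
  have hlog : Real.logb 2 ((1 + a) * (1 + b)) ≤ Real.logb 2 ((2:ℝ) ^ k * (1 + x) ^ 2) :=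
    Real.logb_le_logb_of_le (by norm_num) (by positivity) h
  rw [Real.logb_mul (by positivity) (by positivity), Real.logb_mul (by positivity) (by positivity),
    Real.logb_pow, Real.logb_pow, logb_two_two] at hlog
  unfold Cfun; push_cast at hlog ⊢; linarith

lemma theta_nonneg (hd hc hr hsr P1 ρ1 P2 ρ2 Pr : ℝ)
    (hhd : 0 < hd) (hhc : 0 < hc) (hhr : 0 < hr) (hhsr : 0 < hsr)
    (hP1 : 0 ≤ P1) (hP2 : 0 ≤ P2) (hPr : 0 ≤ Pr) (hρ : ρ1 ^ 2 + ρ2 ^ 2 ≤ 1) :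
    0 ≤ Theta hd hc hr hsr P1 ρ1 P2 ρ2 Pr := by
  unfold Theta
  rw [Real.sqrt_mul hP1]
  set a := Real.sqrt P1 with hadef
  set b := Real.sqrt Pr with hbdef
  have ha2 : a ^ 2 = P1 := Real.sq_sqrt hP1
  have hb2 : b ^ 2 = Pr := Real.sq_sqrt hPr
  have h4 : 0 ≤ hc ^ 2 / (hc ^ 2 + hsr ^ 2) * (hd * Real.sqrt P2 + hr * ρ2 * b) ^ 2
      / (hc ^ 2 / (hc ^ 2 + hsr ^ 2) + hc ^ 2 * P2) := by
    apply div_nonneg (mul_nonneg (by positivity) (sq_nonneg _))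
    have h5 : (0:ℝ) < hc ^ 2 / (hc ^ 2 + hsr ^ 2) := by positivity
    nlinarith [mul_nonneg (sq_nonneg hc) hP2]
  have key : 0 ≤ hc ^ 2 * a ^ 2 + hr ^ 2 * (1 - ρ2 ^ 2) * b ^ 2
      + 2 * hc * hr * ρ1 * (a * b) := by
    nlinarith [sq_nonneg (hc * a + hr * ρ1 * b),
      mul_nonneg (mul_nonneg (sq_nonneg hr) (sq_nonneg b))
        (by linarith : (0:ℝ) ≤ 1 - ρ1 ^ 2 - ρ2 ^ 2)]
  rw [ha2, hb2] at key
  linarith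

lemma theta_le (hd hc hr hsr P P1 ρ1 P2 ρ2 Pr : ℝ)
    (hhd : 0 < hd) (hhc : 0 < hc) (hhr : 0 < hr) (hhsr : 0 < hsr) (hrc : hr ≤ hc)
    (hP1 : P1 ∈ Set.Icc 0 P) (hP2 : P2 ∈ Set.Icc 0 P) (hPr : Pr ∈ Set.Icc 0 P)
    (hρ : ρ1 ^ 2 + ρ2 ^ 2 ≤ 1) :
    Theta hd hc hr hsr P1 ρ1 P2 ρ2 Pr
      ≤ hc ^ 2 * P * (2 + ρ2 ^ 2 + 2 * |ρ1|) + 2 * (hd ^ 2 / hc ^ 2) := by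
  obtain ⟨hP10, hP1P⟩ := hP1
  obtain ⟨hP20, hP2P⟩ := hP2
  obtain ⟨hPr0, hPrP⟩ := hPr
  have hP0 : 0 ≤ P := le_trans hP10 hP1P
  have hρ1 : ρ1 ^ 2 ≤ 1 := by nlinarith [sq_nonneg ρ2]
  have hρ2 : ρ2 ^ 2 ≤ 1 := by nlinarith [sq_nonneg ρ1]
  have hr2 : hr ^ 2 ≤ hc ^ 2 := by nlinarith
  have hrP : hr ^ 2 * Pr ≤ hc ^ 2 * P := by
    nlinarith [mul_nonneg (sub_nonneg.2 hr2) hPr0,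
      mul_nonneg (sq_nonneg hc) (sub_nonneg.2 hPrP)]
  unfold Theta
  -- the square root of `P1 * Pr` is at most `P`
  have hs : 0 ≤ Real.sqrt (P1 * Pr) := Real.sqrt_nonneg _
  have hsP : Real.sqrt (P1 * Pr) ≤ P := by
    have h := Real.sqrt_le_sqrt (by nlinarith [mul_le_mul hP1P hPrP hPr0 hP0] :
      P1 * Pr ≤ P * P)
    rwa [Real.sqrt_mul_self hP0] at h
  -- Term 1
  have h1 : hc ^ 2 * P1 ≤ hc ^ 2 * P := mul_le_mul_of_nonneg_left hP1P (sq_nonneg hc)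
  -- Term 2
  have h2 : hr ^ 2 * (1 - ρ2 ^ 2) * Pr ≤ hc ^ 2 * P * (1 - ρ2 ^ 2) := by
    nlinarith [mul_nonneg (sub_nonneg.2 hrP) (sub_nonneg.2 hρ2)]
  -- Term 3
  have h3 : 2 * hc * hr * ρ1 * Real.sqrt (P1 * Pr) ≤ 2 * (hc ^ 2 * P) * |ρ1| := by
    have e1 : 0 ≤ (hc * P - hr * Real.sqrt (P1 * Pr)) * |ρ1| :=
      mul_nonneg (sub_nonneg.2 (mul_le_mul hrc hsP hs hhc.le)) (abs_nonneg ρ1)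
    have e2 : 0 ≤ hr * Real.sqrt (P1 * Pr) * (|ρ1| - ρ1) :=
      mul_nonneg (mul_nonneg hhr.le hs) (sub_nonneg.2 (le_abs_self ρ1))
    nlinarith [mul_nonneg hhc.le e1, mul_nonneg hhc.le e2]
  -- Term 4
  set σ : ℝ := hc ^ 2 / (hc ^ 2 + hsr ^ 2) with hσdef
  have hσpos : 0 < σ := by rw [hσdef]; positivity
  have hσ1 : σ ≤ 1 := by
    rw [hσdef, div_le_one (by positivity)]; nlinarith [sq_nonneg hsr]
  have hD : 0 < σ + hc ^ 2 * P2 := by nlinarith [mul_nonneg (sq_nonneg hc) hP20]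
  have h4 : σ * (hd * Real.sqrt P2 + hr * ρ2 * Real.sqrt Pr) ^ 2 / (σ + hc ^ 2 * P2)
      ≤ 2 * (hc ^ 2 * P) * ρ2 ^ 2 + 2 * (hd ^ 2 / hc ^ 2) := by
    set c := Real.sqrt P2 with hcdef
    set d := Real.sqrt Pr with hddef
    have hc2 : c ^ 2 = P2 := Real.sq_sqrt hP20
    have hd2 : d ^ 2 = Pr := Real.sq_sqrt hPr0
    have hN : (hd * c + hr * ρ2 * d) ^ 2
        ≤ 2 * hd ^ 2 * c ^ 2 + 2 * hr ^ 2 * ρ2 ^ 2 * d ^ 2 := by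
      nlinarith [sq_nonneg (hd * c - hr * ρ2 * d)]
    rw [hc2, hd2] at hN
    have step1 : σ * (hd * c + hr * ρ2 * d) ^ 2 / (σ + hc ^ 2 * P2)
        ≤ σ * (2 * hd ^ 2 * P2 + 2 * hr ^ 2 * ρ2 ^ 2 * Pr) / (σ + hc ^ 2 * P2) :=
      (div_le_div_iff_of_pos_right hD).2 (mul_le_mul_of_nonneg_left hN hσpos.le)
    refine step1.trans ?_
    rw [div_le_iff₀ hD]
    have hv : hd ^ 2 / hc ^ 2 * hc ^ 2 = hd ^ 2 :=
      div_mul_cancel₀ _ (ne_of_gt (pow_pos hhc 2))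
    have hv2 : hd ^ 2 / hc ^ 2 * hc ^ 2 * P2 = hd ^ 2 * P2 := by rw [hv]
    nlinarith [mul_nonneg (mul_nonneg hσpos.le (sq_nonneg ρ2)) (sub_nonneg.2 hrP),
      mul_nonneg (mul_nonneg (sq_nonneg hd) hP20) (sub_nonneg.2 hσ1),
      mul_nonneg (mul_nonneg (mul_nonneg (sq_nonneg hc) hP0) (sq_nonneg ρ2))
        (mul_nonneg (sq_nonneg hc) hP20),
      mul_nonneg (div_nonneg (sq_nonneg hd) (sq_nonneg hc)) hσpos.le, hv2]
  linarith [h1, h2, h3, h4]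

theorem stmt14 (hd hc hr hsr P : ℝ)
    (hhd : 0 < hd) (hhc : 0 < hc) (hhr : 0 < hr) (hhsr : 0 < hsr) (hP : 0 < P)
    (hweak : hr ^ 2 ≤ min (hd ^ 2) (hc ^ 2))
     :
    RbarSym hd hc hr hsr P - (if hc ^ 2 ≤ hd ^ 2 then min (RAIC hd hc P) (RBIC hd hc P) else min (RCIC hd P) (RDIC hd hc P)) ≤ 3 / 2 + Cfun (hsr ^ 2 / hc ^ 2) := by
  have hrd2 : hr ^ 2 ≤ hd ^ 2 := le_trans hweak (min_le_left _ _)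
  have hrc2 : hr ^ 2 ≤ hc ^ 2 := le_trans hweak (min_le_right _ _)
  have hrd : hr ≤ hd := by
    calc hr = Real.sqrt (hr ^ 2) := (Real.sqrt_sq hhr.le).symm
      _ ≤ Real.sqrt (hd ^ 2) := Real.sqrt_le_sqrt hrd2
      _ = hd := Real.sqrt_sq hhd.le
  have hrc : hr ≤ hc := by
    calc hr = Real.sqrt (hr ^ 2) := (Real.sqrt_sq hhr.le).symm
      _ ≤ Real.sqrt (hc ^ 2) := Real.sqrt_le_sqrt hrc2
      _ = hc := Real.sqrt_sq hhc.le
  set s : ℝ := hsr ^ 2 / hc ^ 2 with hsdef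
  have hs0 : 0 ≤ s := by positivity
  have hCs : 0 ≤ Cfun s := Cfun_nonneg hs0
  -- facts about RbarS1
  have hA0 : 0 ≤ P * (hd ^ 2 + hc ^ 2 + hr ^ 2 + 2 * hr * Real.sqrt (hd ^ 2 + hc ^ 2)) := by
    positivity
  have hPAY : P * (hd ^ 2 + hc ^ 2 + hr ^ 2 + 2 * hr * Real.sqrt (hd ^ 2 + hc ^ 2))
      ≤ 4 * (hd ^ 2 * P + hc ^ 2 * P) := by
    have hS2 : Real.sqrt (hd ^ 2 + hc ^ 2) ^ 2 = hd ^ 2 + hc ^ 2 :=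
      Real.sq_sqrt (by positivity)
    have hS0 : 0 ≤ Real.sqrt (hd ^ 2 + hc ^ 2) := Real.sqrt_nonneg _
    have hrS : hr ≤ Real.sqrt (hd ^ 2 + hc ^ 2) := by
      calc hr = Real.sqrt (hr ^ 2) := (Real.sqrt_sq hhr.le).symm
        _ ≤ Real.sqrt (hd ^ 2 + hc ^ 2) := Real.sqrt_le_sqrt (by nlinarith [sq_nonneg hc])
        _ = Real.sqrt (hd ^ 2 + hc ^ 2) := rfl
    have hAle : hd ^ 2 + hc ^ 2 + hr ^ 2 + 2 * hr * Real.sqrt (hd ^ 2 + hc ^ 2)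
        ≤ 4 * (hd ^ 2 + hc ^ 2) := by
      nlinarith [mul_nonneg (sub_nonneg.2 hrS) hS0, mul_nonneg (sub_nonneg.2 hrS) hhr.le]
    nlinarith [mul_le_mul_of_nonneg_left hAle hP.le]
  have hYnn : (0:ℝ) ≤ hd ^ 2 * P + hc ^ 2 * P := by positivity
  have hC1 : Cfun (P * (hd ^ 2 + hc ^ 2 + hr ^ 2 + 2 * hr * Real.sqrt (hd ^ 2 + hc ^ 2)))
      ≤ (4:ℕ) / 2 + Cfun (hd ^ 2 * P + hc ^ 2 * P) := by
    apply Cfun_le_shift 4 hA0 hYnn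
    norm_num
    linarith
  -- second term of RbarS1
  have hden : (0:ℝ) < 1 + max (hc ^ 2) (hsr ^ 2) * P := by
    have h1 : (0:ℝ) ≤ max (hc ^ 2) (hsr ^ 2) * P :=
      mul_nonneg (le_trans (sq_nonneg hc) (le_max_left _ _)) hP.le
    linarith
  have harg2nn : 0 ≤ hd ^ 2 * P / (1 + max (hc ^ 2) (hsr ^ 2) * P) := by
    apply div_nonneg (by positivity) hden.le
  have harg2 : hd ^ 2 * P / (1 + max (hc ^ 2) (hsr ^ 2) * P) ≤ hd ^ 2 / hc ^ 2 := by
    rw [div_le_div_iff₀ hden (pow_pos hhc 2)]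
    have h1 : hc ^ 2 ≤ max (hc ^ 2) (hsr ^ 2) := le_max_left _ _
    nlinarith [mul_nonneg (sub_nonneg.2 h1) (mul_nonneg (sq_nonneg hd) hP.le), sq_nonneg hd]
  have hC2w : Cfun (hd ^ 2 * P / (1 + max (hc ^ 2) (hsr ^ 2) * P)) ≤ Cfun (hd ^ 2 / hc ^ 2) :=
    Cfun_mono harg2nn harg2
  norm_num at hC1
  by_cases hcd : hc ^ 2 ≤ hd ^ 2
  · -- weak interference
    rw [if_pos hcd, sub_le_iff_le_add]
    have hX0 : (0:ℝ) ≤ hc ^ 2 * P + hd ^ 2 / hc ^ 2 := by positivity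
    have hCX : 0 ≤ Cfun (hc ^ 2 * P + hd ^ 2 / hc ^ 2) := Cfun_nonneg hX0
    -- bound on RbarS2
    have key2 : RbarS2 hd hc hr hsr P
        ≤ 2 + 2 * Cfun (hsr ^ 2 / hc ^ 2) + 2 * Cfun (hc ^ 2 * P + hd ^ 2 / hc ^ 2) := by
      apply Real.sSup_le _ (by linarith)
      rintro y ⟨P1, P2, Pr, ρ1, ρ2, hP1, hP2, hPr, hρ, rfl⟩
      have hρ' : ρ2 ^ 2 + ρ1 ^ 2 ≤ 1 := by linarith
      have h12 := theta_le hd hc hr hsr P P1 ρ1 P2 ρ2 Pr hhd hhc hhr hhsr hrc hP1 hP2 hPr hρ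
      have h21 := theta_le hd hc hr hsr P P2 ρ2 P1 ρ1 Pr hhd hhc hhr hhsr hrc hP2 hP1 hPr hρ'
      have hn12 := theta_nonneg hd hc hr hsr P1 ρ1 P2 ρ2 Pr hhd hhc hhr hhsr
        hP1.1 hP2.1 hPr.1 hρ
      have hn21 := theta_nonneg hd hc hr hsr P2 ρ2 P1 ρ1 Pr hhd hhc hhr hhsr
        hP2.1 hP1.1 hPr.1 hρ'
      have habs : |ρ1| + |ρ2| ≤ 3 / 2 := by
        nlinarith [sq_abs ρ1, sq_abs ρ2, abs_nonneg ρ1, abs_nonneg ρ2,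
          sq_nonneg (|ρ1| - |ρ2|), sq_nonneg (|ρ1| + |ρ2| - 3 / 2)]
      have hu : (0:ℝ) ≤ hc ^ 2 * P := by positivity
      have hv : (0:ℝ) ≤ hd ^ 2 / hc ^ 2 := by positivity
      have hsum : Theta hd hc hr hsr P1 ρ1 P2 ρ2 Pr + Theta hd hc hr hsr P2 ρ2 P1 ρ1 Pr
          ≤ 8 * (hc ^ 2 * P + hd ^ 2 / hc ^ 2) := by
        nlinarith [mul_nonneg hu (sub_nonneg.2 hρ), mul_nonneg hu (sub_nonneg.2 habs), hv, h12, h21]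
      have hprod : (1 + Theta hd hc hr hsr P1 ρ1 P2 ρ2 Pr)
            * (1 + Theta hd hc hr hsr P2 ρ2 P1 ρ1 Pr)
          ≤ 2 ^ 4 * (1 + (hc ^ 2 * P + hd ^ 2 / hc ^ 2)) ^ 2 := by
        nlinarith [sq_nonneg (Theta hd hc hr hsr P1 ρ1 P2 ρ2 Pr
            - Theta hd hc hr hsr P2 ρ2 P1 ρ1 Pr),
          mul_nonneg (sub_nonneg.2 hsum) (add_nonneg hn12 hn21),
          mul_nonneg (sub_nonneg.2 hsum) (by positivity : (0:ℝ) ≤ 8 * (hc ^ 2 * P + hd ^ 2 / hc ^ 2))]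
      have hCC := Cfun_add_le 4 hn12 hn21 hX0 hprod
      norm_num at hCC
      linarith
    rcases min_cases (RAIC hd hc P) (RBIC hd hc P) with ⟨hmin, _⟩ | ⟨hmin, _⟩ <;> rw [hmin]
    · -- compare with RAIC via RbarS2
      have hm : RbarSym hd hc hr hsr P ≤ (1 / 2) * RbarS2 hd hc hr hsr P :=
        le_trans (min_le_left _ _) (min_le_right _ _)
      unfold RAIC
      linarith
    · -- compare with RBIC via RbarS1
      have hm : RbarSym hd hc hr hsr P ≤ (1 / 2) * RbarS1 hd hc hr hsr P :=
        le_trans (min_le_left _ _) (min_le_left _ _)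
      unfold RbarS1 at hm
      unfold RBIC
      linarith
  · -- strong interference
    push_neg at hcd
    rw [if_neg (not_le.2 hcd), sub_le_iff_le_add]
    rcases min_cases (RCIC hd P) (RDIC hd hc P) with ⟨hmin, _⟩ | ⟨hmin, _⟩ <;> rw [hmin]
    · -- compare with RCIC via Rind
      have hm : RbarSym hd hc hr hsr P ≤ Rind hd hr P := min_le_right _ _
      have hind : Cfun (P * (hd + hr) ^ 2) ≤ ((2:ℕ) : ℝ) / 2 + Cfun (hd ^ 2 * P) := by
        apply Cfun_le_shift 2 (by positivity) (by positivity)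
        norm_num
        nlinarith [mul_nonneg hP.le (mul_nonneg (sub_nonneg.2 hrd)
          (by positivity : (0:ℝ) ≤ 3 * hd + hr))]
      norm_num at hind
      unfold Rind at hm
      unfold RCIC
      linarith
    · -- compare with RDIC via RbarS1
      have hm : RbarSym hd hc hr hsr P ≤ (1 / 2) * RbarS1 hd hc hr hsr P :=
        le_trans (min_le_left _ _) (min_le_left _ _)
      have harg21 : hd ^ 2 * P / (1 + max (hc ^ 2) (hsr ^ 2) * P) ≤ 1 := by
        have : hd ^ 2 / hc ^ 2 ≤ 1 := by
          rw [div_le_one (pow_pos hhc 2)]; linarith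
        linarith
      have hC2s : Cfun (hd ^ 2 * P / (1 + max (hc ^ 2) (hsr ^ 2) * P))
          ≤ ((1:ℕ) : ℝ) / 2 + Cfun 0 := by
        apply Cfun_le_shift 1 harg2nn le_rfl
        norm_num
        linarith
      rw [Cfun_zero] at hC2s
      norm_num at hC2s
      unfold RbarS1 at hm
      unfold RDIC
      linarith
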